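/- Fix c ∈ (0,1] and φ ∈ [0,π] with c < 1 or φ < π. For m, n ∈ ℤ define K(m,n) = (1/2π)∫_{−φ}^{φ} (1+c e^{iθ})^n e^{imθ} dθ if n ≤ 0 and K(m,n) = (1/2π)∫_{φ}^{2π−φ} (1+c e^{iθ})^n e^{imθ} dθ if n > 0 (the translation-invariant dynamical discrete sine kernel), and define K′(m,n) = (1/2π)∫_{−(π−φ)}^{π−φ} (1−c e^{iθ})^n e^{imθ} dθ if n ≥ 0 and K′(m,n) = (1/2π)∫_{π−φ}^{π+φ} (1−c e^{iθ})^n e^{imθ} dθ if n < 0 (the Okounkov–Reshetikhin incomplete beta kernel after the linear transformation of the lattice, with arc angle π−φ). Then K(m,n) = (−1)^m·K′(m,n) for all n ≠ 0, and K(m,0) = δ_{m,0} − (−1)^m·K′(m,0); i.e., up to conjugation by a gauge factor (which does not change correlation functions), the two kernels are related by the particle–hole involution K ↦ δ − K composed with a linear transformation of the lattice ℤ². -/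

import Mathlib

/-
Under `θ ↦ θ + π` the factor `e^{iθ}` changes sign and `e^{imθ}` picks up `(-1)^m`, so `(-1)^m`
times the Okounkov–Reshetikhin integrand over an arc is the sine-kernel integrand over the
antipodal arc, and antipodes swap the arcs of the two kernels. For `n = 0` the two arcs of the
sine kernel together cover a full period, over which `e^{imθ}` integrates to `2π δ_{m,0}`.
-/

open Real Complex

/-- The translation-invariant dynamical discrete sine kernel: for `n ≤ 0` integrate over
the arc `[−φ, φ]` and for `n > 0` over the arc `[φ, 2π−φ]`. -/
noncomputable def Ksine (c φ : ℝ) (m n : ℤ) : ℂ :=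
  (1 / (2 * Real.pi)) *
    (if n ≤ 0 then
      ∫ θ in (-φ)..φ, (1 + (c : ℂ) * Complex.exp (θ * Complex.I)) ^ n
        * Complex.exp ((m : ℂ) * θ * Complex.I)
    else
      ∫ θ in φ..(2 * Real.pi - φ), (1 + (c : ℂ) * Complex.exp (θ * Complex.I)) ^ n
        * Complex.exp ((m : ℂ) * θ * Complex.I))

/-- The Okounkov–Reshetikhin incomplete beta kernel after the linear transformation of
the lattice, with arc angle `π − φ`: for `n ≥ 0` integrate over `[−(π−φ), π−φ]` and for
`n < 0` over `[π−φ, π+φ]`. -/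
noncomputable def Kor (c φ : ℝ) (m n : ℤ) : ℂ :=
  (1 / (2 * Real.pi)) *
    (if 0 ≤ n then
      ∫ θ in (-(Real.pi - φ))..(Real.pi - φ),
        (1 - (c : ℂ) * Complex.exp (θ * Complex.I)) ^ n
          * Complex.exp ((m : ℂ) * θ * Complex.I)
    else
      ∫ θ in (Real.pi - φ)..(Real.pi + φ),
        (1 - (c : ℂ) * Complex.exp (θ * Complex.I)) ^ n
          * Complex.exp ((m : ℂ) * θ * Complex.I))

theorem exp_int_mul_add_pi_mul_I (m : ℤ) (θ : ℂ) :
    exp (m * (θ + π) * I) = (-1 : ℂ) ^ m * exp (m * θ * I) := by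
  rw [mul_add, add_mul, Complex.exp_add, mul_assoc _ (π : ℂ), exp_int_mul, exp_pi_mul_I, mul_comm]

theorem neg_one_zpow_mul_integral_eq_integral_add_pi (g : ℂ → ℂ) (m : ℤ) (a b : ℝ) :
    (-1 : ℂ) ^ m * ∫ θ in a..b, g (exp (θ * I)) * exp (m * θ * I) =
      ∫ θ in (a + π)..(b + π), g (-exp (θ * I)) * exp (m * θ * I) := by
  rw [← intervalIntegral.integral_comp_add_right, ← intervalIntegral.integral_const_mul]
  congr 1 with θ
  push_cast
  rw [add_mul, exp_add_pi_mul_I, neg_neg, exp_int_mul_add_pi_mul_I]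
  ring

theorem integral_exp_int_mul_I_period (m : ℤ) (a : ℝ) :
    ∫ θ in a..(a + 2 * π), exp (m * θ * I) = if m = 0 then (2 * π : ℂ) else 0 := by
  split_ifs with hm
  · simp [hm]
  · have hmI : (m : ℂ) * I ≠ 0 := mul_ne_zero (Int.cast_ne_zero.mpr hm) I_ne_zero
    simp_rw [mul_right_comm _ _ I]
    rw [integral_exp_mul_complex hmI]
    push_cast
    rw [mul_add, Complex.exp_add, show (m : ℂ) * I * (2 * π) = m * (2 * π * I) by ring,
      exp_int_mul_two_pi_mul_I, mul_one, sub_self, zero_div]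

theorem neg_one_zpow_mul_self {α : Type*} [DivisionRing α] (m : ℤ) :
    (-1 : α) ^ m * (-1) ^ m = 1 := by
  rw [← zpow_add₀ (neg_ne_zero.mpr one_ne_zero), Even.neg_one_zpow ⟨m, rfl⟩]

section Kernels

variable (c φ : ℝ) (m : ℤ) {n : ℤ}

theorem neg_one_zpow_mul_Kor_of_nonneg (hn : 0 ≤ n) :
    (-1 : ℂ) ^ m * Kor c φ m n = 1 / (2 * π) *
      ∫ θ in φ..(2 * π - φ), (1 + (c : ℂ) * exp (θ * I)) ^ n * exp (m * θ * I) := by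
  have h := neg_one_zpow_mul_integral_eq_integral_add_pi (fun w ↦ (1 - (c : ℂ) * w) ^ n) m
    (-(π - φ)) (π - φ)
  rw [show -(π - φ) + π = φ by ring, show π - φ + π = 2 * π - φ by ring] at h
  simp only [mul_neg, sub_neg_eq_add] at h
  rw [Kor, if_pos hn, mul_left_comm, h]

theorem Ksine_eq_neg_one_zpow_mul_Kor_of_pos (hn : 0 < n) :
    Ksine c φ m n = (-1 : ℂ) ^ m * Kor c φ m n := by
  rw [neg_one_zpow_mul_Kor_of_nonneg c φ m hn.le, Ksine, if_neg hn.not_ge]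

theorem Kor_eq_neg_one_zpow_mul_Ksine_of_neg (hn : n < 0) :
    Kor c φ m n = (-1 : ℂ) ^ m * Ksine c φ m n := by
  have h := neg_one_zpow_mul_integral_eq_integral_add_pi (fun w ↦ (1 + (c : ℂ) * w) ^ n) m
    (-φ) φ
  rw [show -φ + π = π - φ by ring, add_comm φ] at h
  simp only [mul_neg, ← sub_eq_add_neg] at h
  rw [Kor, Ksine, if_neg hn.not_ge, if_pos hn.le, mul_left_comm, h]

theorem Ksine_zero_add_neg_one_zpow_mul_Kor_zero :
    Ksine c φ m 0 + (-1 : ℂ) ^ m * Kor c φ m 0 = if m = 0 then 1 else 0 := by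
  rw [neg_one_zpow_mul_Kor_of_nonneg c φ m le_rfl, Ksine, if_pos le_rfl, ← mul_add]
  simp only [zpow_zero, one_mul]
  rw [intervalIntegral.integral_add_adjacent_intervals
      (Continuous.intervalIntegrable (by fun_prop) _ _)
      (Continuous.intervalIntegrable (by fun_prop) _ _),
    sub_eq_neg_add, integral_exp_int_mul_I_period]
  split_ifs
  · field_simp
  · rw [mul_zero]

end Kernels

theorem stmt_16_general (c φ : ℝ) :
    (∀ m n : ℤ, n ≠ 0 → Ksine c φ m n = (-1 : ℂ) ^ m * Kor c φ m n)
    ∧ (∀ m : ℤ, Ksine c φ m 0 =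
        (if m = 0 then 1 else 0) - (-1 : ℂ) ^ m * Kor c φ m 0) := by
  refine ⟨fun m n hn ↦ ?_, fun m ↦ ?_⟩
  · rcases hn.lt_or_gt with hneg | hpos
    · rw [Kor_eq_neg_one_zpow_mul_Ksine_of_neg c φ m hneg, ← mul_assoc,
        neg_one_zpow_mul_self, one_mul]
    · exact Ksine_eq_neg_one_zpow_mul_Kor_of_pos c φ m hpos
  · rw [← Ksine_zero_add_neg_one_zpow_mul_Kor_zero, add_sub_cancel_right]

/-- Up to the gauge factor `(−1)^m`, the dynamical discrete sine kernel and the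
Okounkov–Reshetikhin kernel are related by the particle–hole involution `K ↦ δ − K`
composed with a linear transformation of the lattice. -/
theorem stmt_16 (c φ : ℝ) (hc0 : 0 < c) (hc1 : c ≤ 1)
    (hφ0 : 0 ≤ φ) (hφπ : φ ≤ Real.pi) (hnd : c < 1 ∨ φ < Real.pi) :
    (∀ m n : ℤ, n ≠ 0 → Ksine c φ m n = (-1 : ℂ) ^ m * Kor c φ m n)
    ∧ (∀ m : ℤ, Ksine c φ m 0 =
        (if m = 0 then 1 else 0) - (-1 : ℂ) ^ m * Kor c φ m 0) :=
  stmt_16_general c φ
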